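/- Let K ⊆ V ⊗ k be a strictly characteristic subspace. If g ∈ O_K(V) satisfies g(v) = v for some v ∈ I(V) (i.e. some nonzero vector v ∈ V with ⟨v, v⟩ = 0), then g is the identity of V. In other words, the action of O_K(V) on I(V) is free. -/

import Mathlib

open TensorProduct

noncomputable section

variable (p : ℕ) [Fact p.Prime] (k : Type) [Field k] [CharP k p] [Algebra (ZMod p) k]

/-- The `p`-power (Frobenius) map on `k` as a `ZMod p`-linear map. -/
def frobLin : k →ₗ[ZMod p] k where
  toFun a := a ^ p
  map_add' a b := add_pow_char a b p
  map_smul' c a := by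
    simp only [RingHom.id_apply]
    rw [Algebra.smul_def, Algebra.smul_def, mul_pow, ← map_pow, ZMod.pow_card]

variable (V : Type) [AddCommGroup V] [Module (ZMod p) V]

/-- The Frobenius-semilinear endomorphism `φ = id_V ⊗ (λ ↦ λ^p)` of `k ⊗[𝔽_p] V`. -/
def frobT : (k ⊗[ZMod p] V) →ₛₗ[frobenius k p] (k ⊗[ZMod p] V) where
  toFun := LinearMap.rTensor V (frobLin p k)
  map_add' := map_add _
  map_smul' c x := by
    induction x using TensorProduct.induction_on with
    | zero => simp
    | tmul a v =>
        simp [smul_tmul', frobLin, frobenius_def, mul_pow]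
    | add x y hx hy => simp_all [smul_add]

variable [IsAlgClosed k]

instance : RingHomSurjective (frobenius k p) := ⟨surjective_frobenius k p⟩

/-- The base change to `k` of the bilinear form `B`. -/
abbrev bcForm (B : LinearMap.BilinForm (ZMod p) V) :
    LinearMap.BilinForm k (k ⊗[ZMod p] V) :=
  LinearMap.BilinForm.baseChange k B

variable (σ₀ : ℕ) (B : LinearMap.BilinForm (ZMod p) V)

/-- `K ⊆ V ⊗ k` is a characteristic subspace: totally isotropic of dimension `σ₀`,
and `K + φ(K)` has dimension `σ₀ + 1`. -/
def IsCharacteristicSub (K : Submodule k (k ⊗[ZMod p] V)) : Prop :=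
  (∀ x ∈ K, ∀ y ∈ K, bcForm p k V B x y = 0) ∧
  Module.finrank k K = σ₀ ∧
  Module.finrank k ↥(K ⊔ Submodule.map (frobT p k V) K) = σ₀ + 1

/-- `K` is strictly characteristic if moreover `∑ᵢ φ^i(K) = V ⊗ k`. -/
def IsStrictlyCharacteristicSub (K : Submodule k (k ⊗[ZMod p] V)) : Prop :=
  IsCharacteristicSub p k V σ₀ B K ∧
  (⨆ i : ℕ, (Submodule.map (frobT p k V))^[i] K) = ⊤

/-- `l_K = K ∩ φ(K) ∩ ⋯ ∩ φ^{σ₀ − 1}(K)`. -/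
def lK (K : Submodule k (k ⊗[ZMod p] V)) : Submodule k (k ⊗[ZMod p] V) :=
  ⨅ i : Fin σ₀, (Submodule.map (frobT p k V))^[(i : ℕ)] K

/-- The group `O_K(V)` of isometries of `(V, B)` such that `g ⊗ k` maps `K` to itself. -/
def OK (K : Submodule k (k ⊗[ZMod p] V)) : Subgroup (V ≃ₗ[ZMod p] V) where
  carrier := {g : V ≃ₗ[ZMod p] V | (∀ x y : V, B (g x) (g y) = B x y) ∧
    Submodule.map (LinearMap.baseChange k (g : V →ₗ[ZMod p] V)) K = K}
  one_mem' := by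
    refine ⟨fun x y => rfl, ?_⟩
    rw [LinearEquiv.coe_toLinearMap_one, LinearMap.baseChange_id, Submodule.map_id]
  mul_mem' := by
    rintro g h ⟨hg1, hg2⟩ ⟨hh1, hh2⟩
    refine ⟨fun x y => (hg1 (h x) (h y)).trans (hh1 x y), ?_⟩
    have hco : ((g * h : V ≃ₗ[ZMod p] V) : V →ₗ[ZMod p] V)
        = (g : V →ₗ[ZMod p] V).comp (h : V →ₗ[ZMod p] V) := rfl
    rw [hco, LinearMap.baseChange_comp, Submodule.map_comp, hh2, hg2]
  inv_mem' := by
    rintro g ⟨hg1, hg2⟩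
    constructor
    · intro x y
      have h1 : g (g⁻¹ x) = x := g.apply_symm_apply x
      have h2 : g (g⁻¹ y) = y := g.apply_symm_apply y
      have := hg1 (g⁻¹ x) (g⁻¹ y)
      rw [h1, h2] at this
      exact this.symm
    · conv_lhs => rw [← hg2]
      rw [← Submodule.map_comp, ← LinearMap.baseChange_comp]
      have hco : ((g⁻¹ : V ≃ₗ[ZMod p] V) : V →ₗ[ZMod p] V).comp (g : V →ₗ[ZMod p] V)
          = LinearMap.id := by
        ext x
        exact g.symm_apply_apply x
      rw [hco, LinearMap.baseChange_id, Submodule.map_id]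

end

section Aux0
set_option linter.unusedSectionVars false

variable (p : ℕ) [Fact p.Prime] (k : Type) [Field k] [CharP k p] [Algebra (ZMod p) k]
  (V : Type) [AddCommGroup V] [Module (ZMod p) V] [IsAlgClosed k]

lemma frobT_tmul (a : k) (v : V) : frobT p k V (a ⊗ₜ v) = (a ^ p) ⊗ₜ v := rfl

/-- Frobenius on `k` as a `ZMod p`-linear equivalence. -/
noncomputable def frobLinEquiv : k ≃ₗ[ZMod p] k :=
  LinearEquiv.ofBijective (frobLin p k) ⟨frobenius_inj k p, surjective_frobenius k p⟩

/-- Inverse of `frobT` as a plain `ZMod p`-linear map. -/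
noncomputable def frobTInv : (k ⊗[ZMod p] V) →ₗ[ZMod p] (k ⊗[ZMod p] V) :=
  LinearMap.rTensor V ((frobLinEquiv p k).symm : k →ₗ[ZMod p] k)

lemma frobTInv_frobT (x : k ⊗[ZMod p] V) : frobTInv p k V (frobT p k V x) = x := by
  induction x using TensorProduct.induction_on with
  | zero => simp [frobTInv]
  | tmul a v =>
      have : (frobLinEquiv p k).symm (a ^ p) = a := by
        have : frobLinEquiv p k a = a ^ p := rfl
        rw [← this, LinearEquiv.symm_apply_apply]
      simp [frobT_tmul, frobTInv, this]
  | add x y hx hy => simp_all [map_add]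

lemma frobT_frobTInv (x : k ⊗[ZMod p] V) : frobT p k V (frobTInv p k V x) = x := by
  induction x using TensorProduct.induction_on with
  | zero => simp [frobTInv]
  | tmul a v =>
      have : ((frobLinEquiv p k).symm a) ^ p = a := by
        have h : frobLinEquiv p k ((frobLinEquiv p k).symm a) = a :=
          LinearEquiv.apply_symm_apply _ _
        exact h
      simp [frobTInv, frobT_tmul, this]
  | add x y hx hy => simp_all [map_add]

lemma frobT_injective : Function.Injective (frobT p k V) :=
  Function.LeftInverse.injective (g := frobTInv p k V) (frobTInv_frobT p k V)

lemma frobT_surjective : Function.Surjective (frobT p k V) :=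
  Function.RightInverse.surjective (g := frobTInv p k V) (frobT_frobTInv p k V)

lemma frobT_smul (c : k) (x : k ⊗[ZMod p] V) :
    frobT p k V (c • x) = c ^ p • frobT p k V x := by
  rw [map_smulₛₗ]; rfl

lemma frobT_iterate_smul (j : ℕ) (c : k) (x : k ⊗[ZMod p] V) :
    (⇑(frobT p k V))^[j] (c • x) = c ^ (p ^ j) • (⇑(frobT p k V))^[j] x := by
  induction j generalizing c x with
  | zero => simp
  | succ n ih =>
      rw [Function.iterate_succ_apply, frobT_smul, ih, ← Function.iterate_succ_apply,
        ← pow_mul, ← pow_succ']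

end Aux0
section Aux1
set_option linter.unusedSectionVars false
set_option maxHeartbeats 1000000

variable (p : ℕ) [Fact p.Prime] (k : Type) [Field k] [CharP k p] [Algebra (ZMod p) k]
  (V : Type) [AddCommGroup V] [Module (ZMod p) V] [IsAlgClosed k]

lemma finrank_map_frobT [FiniteDimensional k (k ⊗[ZMod p] V)]
    (W : Submodule k (k ⊗[ZMod p] V)) :
    Module.finrank k (W.map (frobT p k V)) = Module.finrank k W := by
  classical
  set n := Module.finrank k W with hn
  haveI : Module.Free k W := Module.Free.of_divisionRing k W
  let bW : Module.Basis (Fin n) k W := Module.finBasis k W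
  let v : Fin n → (k ⊗[ZMod p] V) := fun i => (bW i : k ⊗[ZMod p] V)
  have hvli : LinearIndependent k v :=
    bW.linearIndependent.map_injOn W.subtype W.injective_subtype.injOn
  have hvspan : Submodule.span k (Set.range v) = W := by
    have : Set.range v = W.subtype '' Set.range bW := by
      rw [← Set.range_comp]; rfl
    rw [this, ← Submodule.map_span, bW.span_eq, Submodule.map_top, Submodule.range_subtype]
  have hmap : W.map (frobT p k V)
      = Submodule.span k (Set.range (⇑(frobT p k V) ∘ v)) := by
    rw [← hvspan, Submodule.map_span, ← Set.range_comp]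
  have hli2 : LinearIndependent k (⇑(frobT p k V) ∘ v) := by
    refine hvli.map_of_surjective_injective
      (⟨⇑(frobenius k p), map_zero _⟩ : ZeroHom k k)
      (AddMonoidHom.mk' ⇑(frobT p k V) (map_add _)) (surjective_frobenius k p)
      (fun m hm => ?_) (fun r m => ?_)
    · exact frobT_injective p k V (by simpa using hm)
    · simpa [frobenius_def] using frobT_smul p k V r m
  rw [hmap, finrank_span_eq_card hli2, Fintype.card_fin]

lemma mem_map_frobT_iterate (W : Submodule k (k ⊗[ZMod p] V)) (m : ℕ)
    (x : k ⊗[ZMod p] V) :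
    x ∈ (Submodule.map (frobT p k V))^[m] W ↔
      ∃ y ∈ W, (⇑(frobT p k V))^[m] y = x := by
  induction m generalizing x with
  | zero => simp
  | succ n ih =>
      rw [Function.iterate_succ_apply', Submodule.mem_map]
      constructor
      · rintro ⟨y, hy, rfl⟩
        obtain ⟨z, hz, rfl⟩ := (ih y).mp hy
        exact ⟨z, hz, (Function.iterate_succ_apply' _ _ _)⟩
      · rintro ⟨z, hz, rfl⟩
        exact ⟨(⇑(frobT p k V))^[n] z, (ih _).mpr ⟨z, hz, rfl⟩,
          (Function.iterate_succ_apply' _ _ _).symm⟩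

lemma bcForm_frobT (B : LinearMap.BilinForm (ZMod p) V) (x y : k ⊗[ZMod p] V) :
    bcForm p k V B (frobT p k V x) (frobT p k V y) = (bcForm p k V B x y) ^ p := by
  have hp : p ≠ 0 := (Fact.out : p.Prime).ne_zero
  induction x using TensorProduct.induction_on with
  | zero => simp [zero_pow hp]
  | tmul a m =>
      induction y using TensorProduct.induction_on with
      | zero => simp [zero_pow hp]
      | tmul a' m' =>
          rw [frobT_tmul, frobT_tmul, LinearMap.BilinForm.baseChange_tmul,
            LinearMap.BilinForm.baseChange_tmul, Algebra.smul_def, Algebra.smul_def,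
            mul_pow, ← map_pow, ZMod.pow_card, mul_pow]
      | add y₁ y₂ h₁ h₂ =>
          simp only [map_add]
          rw [h₁, h₂, add_pow_char]
  | add x₁ x₂ h₁ h₂ =>
      simp only [map_add, LinearMap.add_apply, LinearMap.BilinForm.add_left]
      rw [h₁, h₂, add_pow_char]

end Aux1
section Aux2
set_option linter.unusedSectionVars false
set_option linter.unnecessarySimpa false
set_option maxHeartbeats 1000000

variable (p : ℕ) [Fact p.Prime] (k : Type) [Field k] [CharP k p] [Algebra (ZMod p) k]
  (V : Type) [AddCommGroup V] [Module (ZMod p) V] [IsAlgClosed k]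

lemma bcForm_nondegenerate [FiniteDimensional (ZMod p) V]
    (B : LinearMap.BilinForm (ZMod p) V) (hsymm : B.IsSymm) (hnd : B.Nondegenerate) :
    (bcForm p k V B).SeparatingLeft := by
  classical
  intro x hx
  set b : Module.Basis (Fin (Module.finrank (ZMod p) V)) (ZMod p) V := Module.finBasis (ZMod p) V
  set bb := b.baseChange k with hbb
  set D : Module.Basis (Fin (Module.finrank (ZMod p) V)) (ZMod p) V := B.dualBasis hnd b with hD
  have key : ∀ j, bb.repr x j = 0 := by
    intro j
    have hxr : x = ∑ i, bb.repr x i • bb i := (bb.sum_repr x).symm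
    have h0 := hx ((1 : k) ⊗ₜ D j)
    rw [hxr] at h0
    have hterm : ∀ i, bcForm p k V B (bb.repr x i • bb i) ((1 : k) ⊗ₜ D j)
        = bb.repr x i * (if i = j then 1 else 0) := by
      intro i
      rw [LinearMap.BilinForm.smul_left, hbb, Module.Basis.baseChange_apply,
        LinearMap.BilinForm.baseChange_tmul, B.apply_dualBasis_right hnd hsymm]
      by_cases h : i = j <;> simp [h, Algebra.smul_def]
    rw [map_sum, LinearMap.sum_apply] at h0
    simp only [hterm] at h0
    simpa using h0
  have : x = ∑ i, bb.repr x i • bb i := (bb.sum_repr x).symm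
  rw [this]
  simp [key]

end Aux2
section Aux3
set_option linter.unusedSectionVars false
set_option linter.unnecessarySimpa false
set_option maxHeartbeats 1000000

variable (p : ℕ) [Fact p.Prime] (k : Type) [Field k] [CharP k p] [Algebra (ZMod p) k]
  (V : Type) [AddCommGroup V] [Module (ZMod p) V] [IsAlgClosed k]

lemma baseChange_frobT_comm (f : V →ₗ[ZMod p] V) (x : k ⊗[ZMod p] V) :
    LinearMap.baseChange k f (frobT p k V x) = frobT p k V (LinearMap.baseChange k f x) := by
  induction x using TensorProduct.induction_on with
  | zero => simp
  | tmul a v => simp [frobT_tmul, LinearMap.baseChange_tmul]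
  | add x y hx hy => simp_all

lemma map_baseChange_map_frobT (f : V →ₗ[ZMod p] V) (W : Submodule k (k ⊗[ZMod p] V)) :
    (W.map (frobT p k V)).map (LinearMap.baseChange k f)
      = (W.map (LinearMap.baseChange k f)).map (frobT p k V) := by
  ext x
  simp only [Submodule.mem_map]
  constructor
  · rintro ⟨y, ⟨z, hz, rfl⟩, rfl⟩
    exact ⟨_, ⟨z, hz, rfl⟩, (baseChange_frobT_comm p k V f z).symm⟩
  · rintro ⟨y, ⟨z, hz, rfl⟩, rfl⟩
    exact ⟨_, ⟨z, hz, rfl⟩, baseChange_frobT_comm p k V f z⟩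

lemma phiStable_eq_bot [FiniteDimensional (ZMod p) V]
    (σ₀ : ℕ) (B : LinearMap.BilinForm (ZMod p) V)
    (hsymm : B.IsSymm) (hnd : B.Nondegenerate)
    (K : Submodule k (k ⊗[ZMod p] V))
    (hK : IsStrictlyCharacteristicSub p k V σ₀ B K)
    (W : Submodule k (k ⊗[ZMod p] V)) (hWK : W ≤ K)
    (hWphi : W.map (frobT p k V) = W) : W = ⊥ := by
  have key : ∀ (i : ℕ) (w : k ⊗[ZMod p] V), w ∈ W →
      ∀ x ∈ (Submodule.map (frobT p k V))^[i] K, bcForm p k V B w x = 0 := by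
    intro i
    induction i with
    | zero => exact fun w hw x hx => hK.1.1 w (hWK hw) x hx
    | succ n ih =>
        intro w hw x hx
        rw [Function.iterate_succ_apply'] at hx
        obtain ⟨y, hy, rfl⟩ := hx
        have hw' : w ∈ W.map (frobT p k V) := by rw [hWphi]; exact hw
        obtain ⟨u, hu, rfl⟩ := hw'
        rw [bcForm_frobT, ih u hu y hy, zero_pow (Fact.out : p.Prime).ne_zero]
  refine (Submodule.eq_bot_iff W).mpr fun w hw => ?_
  refine bcForm_nondegenerate p k V B hsymm hnd w fun x => ?_
  have hx : x ∈ (⨆ i : ℕ, (Submodule.map (frobT p k V))^[i] K) := by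
    rw [hK.2]; trivial
  have hle : (⨆ i : ℕ, (Submodule.map (frobT p k V))^[i] K)
      ≤ LinearMap.ker (bcForm p k V B w) :=
    iSup_le fun i y hy => by simpa [LinearMap.mem_ker] using key i w hw y hy
  simpa [LinearMap.mem_ker] using hle hx

end Aux3
set_option linter.unusedSectionVars false
set_option linter.unnecessarySimpa false
set_option maxHeartbeats 2000000

section Aux4
variable (p : ℕ) [Fact p.Prime] (k : Type) [Field k] [CharP k p] [Algebra (ZMod p) k]
  (V : Type) [AddCommGroup V] [Module (ZMod p) V] [IsAlgClosed k]

lemma frobT_iterate_zero (m : ℕ) : (⇑(frobT p k V))^[m] 0 = 0 := by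
  induction m with
  | zero => rfl
  | succ n ih => rw [Function.iterate_succ_apply', ih, map_zero]

lemma baseChange_frobT_iterate_comm (f : V →ₗ[ZMod p] V) (m : ℕ) (x : k ⊗[ZMod p] V) :
    (⇑(frobT p k V))^[m] (LinearMap.baseChange k f x)
      = LinearMap.baseChange k f ((⇑(frobT p k V))^[m] x) := by
  induction m generalizing x with
  | zero => rfl
  | succ n ih =>
      rw [Function.iterate_succ_apply', Function.iterate_succ_apply', ih,
        baseChange_frobT_comm]

lemma one_tmul_eq_zero [FiniteDimensional (ZMod p) V] (w : V)
    (h : (1 : k) ⊗ₜ[ZMod p] w = 0) : w = 0 := by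
  classical
  set bV : Module.Basis (Fin (Module.finrank (ZMod p) V)) (ZMod p) V := Module.finBasis (ZMod p) V
  have hr : ∀ i, bV.repr w i = 0 := by
    intro i
    have h1 := congrArg (fun z => (bV.baseChange k).repr z i) h
    simp only [Module.Basis.baseChange_repr_tmul, map_zero, Finsupp.coe_zero, Pi.zero_apply] at h1
    rw [Algebra.smul_def, mul_one] at h1
    exact (algebraMap (ZMod p) k).injective (by simpa using h1)
  have : bV.repr w = 0 := Finsupp.ext hr
  simpa using bV.repr.map_eq_zero_iff.mp this

end Aux4
set_option maxHeartbeats 4000000 in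
/-- the action of `O_K(V)` on the set of nonzero isotropic vectors of `V`
is free. -/
theorem statement9
    (p : ℕ) [Fact p.Prime] (hodd : Odd p)
    (k : Type) [Field k] [CharP k p] [Algebra (ZMod p) k] [IsAlgClosed k]
    (V : Type) [AddCommGroup V] [Module (ZMod p) V]
    (σ₀ : ℕ) (hσ : 1 ≤ σ₀)
    (hdim : Module.finrank (ZMod p) V = 2 * σ₀)
    (B : LinearMap.BilinForm (ZMod p) V)
    (hsymm : B.IsSymm) (hnd : B.Nondegenerate)
    (hnn : ∀ W : Submodule (ZMod p) V,
      (∀ x ∈ W, ∀ y ∈ W, B x y = 0) → Module.finrank (ZMod p) W ≠ σ₀)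
    (K : Submodule k (k ⊗[ZMod p] V))
    (hK : IsStrictlyCharacteristicSub p k V σ₀ B K)
    (g : V ≃ₗ[ZMod p] V) (hg : g ∈ OK p k V B K)
    (v : V) (hv0 : v ≠ 0) (hviso : B v v = 0) (hfix : g v = v) :
    g = 1 := by
  classical
  haveI hfinV : FiniteDimensional (ZMod p) V :=
    FiniteDimensional.of_finrank_pos (by rw [hdim]; omega)
  haveI hfinT : FiniteDimensional k (k ⊗[ZMod p] V) := Module.Finite.base_change _ _ _
  have hppos : 0 < p := (Fact.out : p.Prime).pos
  have hrankT : Module.finrank k (k ⊗[ZMod p] V) = 2 * σ₀ := by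
    rw [Module.finrank_baseChange, hdim]
  obtain ⟨hg1, hg2⟩ := hg
  obtain ⟨⟨hiso, hrankK, hranksup⟩, hKtop⟩ := hK
  set G : (k ⊗[ZMod p] V) →ₗ[k] (k ⊗[ZMod p] V) :=
    LinearMap.baseChange k (g : V →ₗ[ZMod p] V) with hGdef
  -- the tower K_j = K ⊓ φK ⊓ ... ⊓ φ^j K
  set Kt : ℕ → Submodule k (k ⊗[ZMod p] V) :=
    fun j => Nat.rec K (fun _ W => K ⊓ W.map (frobT p k V)) j with hKtdef
  have hKt0 : Kt 0 = K := rfl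
  have hKtS : ∀ j, Kt (j + 1) = K ⊓ (Kt j).map (frobT p k V) := fun j => rfl
  have hKtK : ∀ j, Kt j ≤ K := by
    intro j
    cases j with
    | zero => exact le_rfl
    | succ n => rw [hKtS]; exact inf_le_left
  have hKtmono : ∀ j, Kt (j + 1) ≤ Kt j := by
    intro j
    induction j with
    | zero => rw [hKtS, hKt0]; exact inf_le_left
    | succ n ih =>
        rw [hKtS (n+1), hKtS n]
        exact inf_le_inf_left _ (Submodule.map_mono ih)
  have hKtle : ∀ {i j : ℕ}, i ≤ j → Kt j ≤ Kt i :=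
    fun {i j} h => antitone_nat_of_succ_le hKtmono h
  -- lower bound for dimensions
  have hlow : ∀ j, σ₀ ≤ Module.finrank k (Kt j) + j := by
    intro j
    induction j with
    | zero => rw [hKt0, hrankK]; omega
    | succ n ih =>
        have h1 := Submodule.finrank_sup_add_finrank_inf_eq K ((Kt n).map (frobT p k V))
        have h2 : Module.finrank k ↥(K ⊔ (Kt n).map (frobT p k V)) ≤ σ₀ + 1 := by
          rw [← hranksup]
          exact Submodule.finrank_mono
            (sup_le_sup_left (Submodule.map_mono (hKtK n)) K)
        have h3 : Module.finrank k ↥((Kt n).map (frobT p k V)) = Module.finrank k (Kt n) :=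
          finrank_map_frobT p k V (Kt n)
        rw [← hKtS n] at h1
        rw [hrankK] at h1
        omega
  -- exact dimensions
  have hexact : ∀ j, j < σ₀ → Module.finrank k (Kt j) + j = σ₀ := by
    intro j
    induction j with
    | zero => intro _; rw [hKt0, hrankK]; omega
    | succ n ih =>
        intro hlt
        have ihn := ih (by omega)
        have hne : Kt (n + 1) ≠ Kt n := by
          intro heq
          have hle : Kt n ≤ (Kt n).map (frobT p k V) := by
            conv_lhs => rw [← heq, hKtS]
            exact inf_le_right
          have heq2 : Kt n = (Kt n).map (frobT p k V) :=
            Submodule.eq_of_le_of_finrank_le hle (le_of_eq (finrank_map_frobT p k V (Kt n)))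
          have hbot : Kt n = ⊥ :=
            phiStable_eq_bot p k V σ₀ B hsymm hnd K
              ⟨⟨hiso, hrankK, hranksup⟩, hKtop⟩ (Kt n) (hKtK n) heq2.symm
          rw [hbot, finrank_bot] at ihn
          omega
        have hlt2 : Kt (n + 1) < Kt n := lt_of_le_of_ne (hKtmono n) hne
        have hdec := Submodule.finrank_lt_finrank_of_lt hlt2
        have := hlow (n + 1)
        omega
  have hrankL : Module.finrank k (Kt (σ₀ - 1)) = 1 := by
    have := hexact (σ₀ - 1) (by omega)
    omega
  -- pick e
  have hKtne : Kt (σ₀ - 1) ≠ ⊥ := by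
    intro h
    rw [h, finrank_bot] at hrankL
    omega
  obtain ⟨e, he, he0⟩ := Submodule.exists_mem_ne_zero_of_ne_bot hKtne
  have hspan : Submodule.span k {e} = Kt (σ₀ - 1) :=
    Submodule.eq_of_le_of_finrank_le
      ((Submodule.span_singleton_le_iff_mem e _).mpr he)
      (by rw [hrankL, finrank_span_singleton he0])
  -- G-invariance of the tower
  have hGKt : ∀ j, (Kt j).map G ≤ Kt j := by
    intro j
    induction j with
    | zero => rw [hKt0, hg2]
    | succ n ih =>
        rw [hKtS]
        refine le_trans (Submodule.map_inf_le _) (inf_le_inf ?_ ?_)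
        · rw [hg2]
        · rw [map_baseChange_map_frobT]
          exact Submodule.map_mono ih
  -- eigenvector
  have heG : G e ∈ Submodule.span k {e} := by
    rw [hspan]
    exact hGKt _ (Submodule.mem_map_of_mem he)
  obtain ⟨lam, hlam⟩ := Submodule.mem_span_singleton.mp heG
  -- pull back e by φ^(σ₀-1)
  obtain ⟨f, hf⟩ := (frobT_surjective p k V).iterate (n := σ₀ - 1) e
  have hfne : f ≠ 0 := by
    intro h
    rw [h, frobT_iterate_zero] at hf
    exact he0 hf.symm
  obtain ⟨μ, hμ⟩ := IsAlgClosed.exists_pow_nat_eq lam (n := p ^ (σ₀ - 1)) (pow_pos hppos _)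
  have hGf : G f = μ • f := by
    apply (frobT_injective p k V).iterate (σ₀ - 1)
    rw [frobT_iterate_smul, hf, baseChange_frobT_iterate_comm, hf, hμ, ← hlam]
  -- membership of iterates of f in K
  have hA : ∀ i, Kt i ≤ (Submodule.map (frobT p k V))^[i] K := by
    intro i
    induction i with
    | zero => exact le_rfl
    | succ n ih =>
        rw [hKtS, Function.iterate_succ_apply']
        exact le_trans inf_le_right (Submodule.map_mono ih)
  have hfK : ∀ j, j ≤ σ₀ - 1 → (⇑(frobT p k V))^[j] f ∈ K := by
    intro j hj
    have he1 : e ∈ (Submodule.map (frobT p k V))^[σ₀ - 1 - j] K :=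
      hA (σ₀ - 1 - j) (hKtle (Nat.sub_le _ _) he)
    obtain ⟨y, hy, hyx⟩ := (mem_map_frobT_iterate p k V K (σ₀ - 1 - j) e).mp he1
    have h2 : (⇑(frobT p k V))^[σ₀ - 1 - j] ((⇑(frobT p k V))^[j] f) = e := by
      rw [← Function.iterate_add_apply]
      rw [show σ₀ - 1 - j + j = σ₀ - 1 by omega]
      exact hf
    have := (frobT_injective p k V).iterate (σ₀ - 1 - j) (hyx.trans h2.symm)
    rw [← this]
    exact hy
  -- the spans S m
  set S : ℕ → Submodule k (k ⊗[ZMod p] V) :=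
    fun m => Submodule.span k ((fun j => (⇑(frobT p k V))^[j] f) '' Set.Iio m) with hSdef
  have hS0 : S 0 = ⊥ := by
    simp only [hSdef]
    rw [show (Set.Iio 0 : Set ℕ) = ∅ by ext j; simp]
    simp
  have hSS : ∀ m, S m ⊔ Submodule.span k {(⇑(frobT p k V))^[m] f} = S (m + 1) := by
    intro m
    simp only [hSdef]
    rw [← Submodule.span_union]
    congr 1
    ext x
    simp only [Set.mem_union, Set.mem_image, Set.mem_Iio, Set.mem_singleton_iff]
    constructor
    · rintro (⟨j, hj, rfl⟩ | rfl)
      · exact ⟨j, by omega, rfl⟩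
      · exact ⟨m, by omega, rfl⟩
    · rintro ⟨j, hj, rfl⟩
      rcases Nat.lt_succ_iff_lt_or_eq.mp hj with h | rfl
      · exact Or.inl ⟨j, h, rfl⟩
      · exact Or.inr rfl
  have hSmono : ∀ m, S m ≤ S (m + 1) := fun m => (hSS m) ▸ le_sup_left
  have hSmono' : Monotone S := monotone_nat_of_le_succ hSmono
  have hmemS : ∀ j m, j < m → (⇑(frobT p k V))^[j] f ∈ S m :=
    fun j m h => Submodule.subset_span ⟨j, h, rfl⟩
  have hmapS : ∀ m, (S m).map (frobT p k V) ≤ S (m + 1) := by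
    intro m
    simp only [hSdef]
    rw [Submodule.map_span]
    apply Submodule.span_le.mpr
    rintro _ ⟨_, ⟨j, hj, rfl⟩, rfl⟩
    apply Submodule.subset_span
    exact ⟨j + 1, by simp only [Set.mem_Iio] at hj ⊢; omega, (Function.iterate_succ_apply' _ _ _)⟩
  have hSK : ∀ m, m ≤ σ₀ → S m ≤ K := by
    intro m hm
    apply Submodule.span_le.mpr
    rintro _ ⟨j, hj, rfl⟩
    exact hfK j (by simp at hj; omega)
  -- claim D : no early dependence
  have hD : ∀ m, m ≤ σ₀ → (⇑(frobT p k V))^[m] f ∉ S m := by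
    intro m hm hmem
    have hSeq : S (m + 1) = S m := by
      rw [← hSS m]
      exact sup_eq_left.mpr ((Submodule.span_singleton_le_iff_mem _ _).mpr hmem)
    have hmaple : (S m).map (frobT p k V) ≤ S m := hSeq ▸ hmapS m
    have heq : (S m).map (frobT p k V) = S m :=
      Submodule.eq_of_le_of_finrank_le hmaple (le_of_eq (finrank_map_frobT p k V (S m)).symm)
    have hbot : S m = ⊥ :=
      phiStable_eq_bot p k V σ₀ B hsymm hnd K
        ⟨⟨hiso, hrankK, hranksup⟩, hKtop⟩ (S m) (hSK m hm) heq
    rw [hbot, Submodule.mem_bot] at hmem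
    exact hfne ((frobT_injective p k V).iterate m (by rw [hmem, frobT_iterate_zero]))
  -- dimensions of S m
  have hSrank : ∀ m, m ≤ σ₀ → Module.finrank k (S m) = m := by
    intro m
    induction m with
    | zero => intro _; rw [hS0, finrank_bot]
    | succ n ih =>
        intro hn
        have ihn := ih (by omega)
        have hx : (⇑(frobT p k V))^[n] f ∉ S n := hD n (by omega)
        have hx0 : (⇑(frobT p k V))^[n] f ≠ 0 := by
          intro h
          exact hfne ((frobT_injective p k V).iterate n (by rw [h, frobT_iterate_zero]))
        have h1 := Submodule.finrank_sup_add_finrank_inf_eq (S n)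
          (Submodule.span k {(⇑(frobT p k V))^[n] f})
        have hinf : S n ⊓ Submodule.span k {(⇑(frobT p k V))^[n] f} = ⊥ := by
          rw [eq_bot_iff]
          rintro y hy
          obtain ⟨hy1, hy2⟩ := Submodule.mem_inf.mp hy
          obtain ⟨c, rfl⟩ := Submodule.mem_span_singleton.mp hy2
          rcases eq_or_ne c 0 with hc | hc
          · simp [hc]
          · exact absurd (by
              have : c⁻¹ • (c • (⇑(frobT p k V))^[n] f) ∈ S n := Submodule.smul_mem _ _ hy1
              rwa [smul_smul, inv_mul_cancel₀ hc, one_smul] at this) hx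
        rw [hSS n] at h1
        rw [hinf, finrank_bot, finrank_span_singleton hx0, ihn] at h1
        omega
  -- S σ₀ = K
  have hSsig : S σ₀ = K :=
    Submodule.eq_of_le_of_finrank_le (hSK σ₀ le_rfl)
      (by rw [hSrank σ₀ le_rfl, hrankK])
  -- iterates of K inside S
  have hiter : ∀ i, (Submodule.map (frobT p k V))^[i] K ≤ S (σ₀ + i) := by
    intro i
    induction i with
    | zero => rw [Function.iterate_zero_apply, Nat.add_zero, hSsig]
    | succ n ih =>
        rw [Function.iterate_succ_apply']
        exact le_trans (Submodule.map_mono ih) (hmapS _)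
  -- S (2σ₀) = ⊤
  have hStop : S (2 * σ₀) = ⊤ := by
    by_cases hcase : ∀ m, m < 2 * σ₀ → S m < S (m + 1)
    · have hge : ∀ m, m ≤ 2 * σ₀ → m ≤ Module.finrank k (S m) := by
        intro m
        induction m with
        | zero => intro _; omega
        | succ n ih =>
            intro hn
            have h1 := Submodule.finrank_lt_finrank_of_lt (hcase n (by omega))
            have h2 := ih (by omega)
            omega
      apply Submodule.eq_top_of_finrank_eq
      have h1 := hge (2 * σ₀) le_rfl
      have h2 : Module.finrank k (S (2 * σ₀)) ≤ 2 * σ₀ := by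
        rw [← hrankT]; exact Submodule.finrank_le _
      rw [hrankT]; omega
    · push_neg at hcase
      obtain ⟨m, hm, hnl⟩ := hcase
      have hSeq : S (m + 1) = S m := ((hSmono m).lt_or_eq.resolve_left hnl).symm
      have hmaple : (S m).map (frobT p k V) ≤ S m := hSeq ▸ hmapS m
      have heqm : (S m).map (frobT p k V) = S m :=
        Submodule.eq_of_le_of_finrank_le hmaple (le_of_eq (finrank_map_frobT p k V (S m)).symm)
      have hstab : ∀ i, (⇑(frobT p k V))^[m + i] f ∈ S m := by
        intro i
        induction i with
        | zero =>
            have := hmemS m (m + 1) (Nat.lt_succ_self m)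
            rw [hSeq] at this
            simpa using this
        | succ n ih =>
            rw [show m + (n + 1) = (m + n) + 1 by omega, Function.iterate_succ_apply']
            have h2 : frobT p k V ((⇑(frobT p k V))^[m + n] f) ∈ (S m).map (frobT p k V) :=
              Submodule.mem_map_of_mem ih
            rwa [heqm] at h2
      have hallS : ∀ n, S n ≤ S m := by
        intro n
        apply Submodule.span_le.mpr
        rintro _ ⟨j, hj, rfl⟩
        rcases lt_or_ge j m with h | h
        · exact hmemS j m h
        · have := hstab (j - m)
          rwa [show m + (j - m) = j by omega] at this
      apply le_antisymm le_top
      rw [← hKtop]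
      exact iSup_le fun i =>
        le_trans (hiter i) (le_trans (hallS _) (hSmono' (by omega : m ≤ 2 * σ₀)))
  -- the basis of iterates of f
  have hcard : Fintype.card (Fin (2 * σ₀)) = Module.finrank k (k ⊗[ZMod p] V) := by
    rw [Fintype.card_fin, hrankT]
  have hrange : Set.range (fun j : Fin (2 * σ₀) => (⇑(frobT p k V))^[(j : ℕ)] f)
      = (fun j => (⇑(frobT p k V))^[j] f) '' Set.Iio (2 * σ₀) := by
    ext x
    constructor
    · rintro ⟨j, rfl⟩; exact ⟨(j : ℕ), j.isLt, rfl⟩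
    · rintro ⟨j, hj, rfl⟩; exact ⟨⟨j, hj⟩, rfl⟩
  have htople : ⊤ ≤ Submodule.span k
      (Set.range (fun j : Fin (2 * σ₀) => (⇑(frobT p k V))^[(j : ℕ)] f)) := by
    rw [hrange]
    exact le_of_eq hStop.symm
  set bb : Module.Basis (Fin (2 * σ₀)) k (k ⊗[ZMod p] V) :=
    basisOfTopLeSpanOfCardEqFinrank _ htople hcard with hbbdef
  have hbb : ∀ j : Fin (2 * σ₀), bb j = (⇑(frobT p k V))^[(j : ℕ)] f := by
    intro j
    rw [hbbdef, coe_basisOfTopLeSpanOfCardEqFinrank]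
  -- G acts diagonally on the basis
  have hGb : ∀ j : Fin (2 * σ₀), G (bb j) = μ ^ (p ^ (j : ℕ)) • bb j := by
    intro j
    rw [hbb j, ← baseChange_frobT_iterate_comm, hGf, frobT_iterate_smul]
  -- the fixed vector
  set x₀ : k ⊗[ZMod p] V := (1 : k) ⊗ₜ[ZMod p] v with hx₀def
  have hx₀ne : x₀ ≠ 0 := fun h => hv0 (one_tmul_eq_zero p k V v h)
  have hGx₀ : G x₀ = x₀ := by
    have hgv : (↑(g : V →ₗ[ZMod p] V) : V → V) v = v := hfix
    rw [hx₀def, hGdef, LinearMap.baseChange_tmul, hgv]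
  set c := bb.repr x₀ with hcdef
  have hsum : ∑ j : Fin (2 * σ₀), c j • bb j = x₀ := bb.sum_repr x₀
  have h2 : ∑ j : Fin (2 * σ₀), (μ ^ (p ^ (j : ℕ)) * c j) • bb j = x₀ := by
    calc ∑ j : Fin (2 * σ₀), (μ ^ (p ^ (j : ℕ)) * c j) • bb j
        = ∑ j : Fin (2 * σ₀), c j • G (bb j) := by
          refine Finset.sum_congr rfl fun j _ => ?_
          rw [hGb j, smul_smul, mul_comm]
      _ = G (∑ j : Fin (2 * σ₀), c j • bb j) := by rw [map_sum]; exact Finset.sum_congr rfl fun j _ => (G.map_smul _ _).symm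
      _ = x₀ := by rw [hsum, hGx₀]
  have hcoef : ∀ j : Fin (2 * σ₀), μ ^ (p ^ (j : ℕ)) * c j = c j := by
    have h3 : ∑ j : Fin (2 * σ₀), (μ ^ (p ^ (j : ℕ)) * c j - c j) • bb j = 0 := by
      simp only [sub_smul (R := k) (M := k ⊗[ZMod p] V), Finset.sum_sub_distrib, h2, hsum, sub_self]
    have h4 := Fintype.linearIndependent_iff.mp bb.linearIndependent _ h3
    intro j
    exact sub_eq_zero.mp (h4 j)
  have hexj : ∃ j : Fin (2 * σ₀), c j ≠ 0 := by
    by_contra hno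
    push_neg at hno
    apply hx₀ne
    rw [← hsum]
    simp [hno]
  obtain ⟨j, hcj⟩ := hexj
  have hμ1 : μ = 1 := by
    have h4 : μ ^ (p ^ (j : ℕ)) = 1 :=
      mul_right_cancel₀ hcj (by rw [one_mul]; exact hcoef j)
    have h5 : (μ - 1) ^ (p ^ (j : ℕ)) = 0 := by
      rw [sub_pow_char_pow, h4, one_pow, sub_self]
    have h6 := pow_eq_zero_iff (pow_ne_zero (j : ℕ) (Nat.Prime.ne_zero Fact.out)) |>.mp h5
    exact sub_eq_zero.mp h6
  have hGid : ∀ j : Fin (2 * σ₀), G (bb j) = bb j := by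
    intro j
    rw [hGb j, hμ1, one_pow, one_smul]
  have hGeq : G = LinearMap.id := bb.ext fun j => by rw [hGid]; rfl
  have hfixall : ∀ w : V, g w = w := by
    intro w
    have h6 : G ((1 : k) ⊗ₜ[ZMod p] w) = (1 : k) ⊗ₜ[ZMod p] w := by
      rw [hGeq]; rfl
    have h7 : (1 : k) ⊗ₜ[ZMod p] (g w) = (1 : k) ⊗ₜ[ZMod p] w := by
      rw [hGdef] at h6
      rwa [LinearMap.baseChange_tmul] at h6
    have h8 : (1 : k) ⊗ₜ[ZMod p] (g w - w) = 0 := by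
      rw [TensorProduct.tmul_sub, h7, sub_self]
    have := one_tmul_eq_zero p k V _ h8
    rwa [sub_eq_zero] at this
  exact LinearEquiv.toLinearMap_injective (LinearMap.ext fun w => hfixall w)
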